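/- Let f, g be polynomials of degree ≥ 2 and suppose the Green's functions G_f and G_g (with pole at ∞) of the unbounded Fatou components F_∞ and G_∞ agree on the unbounded component C of F_∞ ∩ G_∞. Then J_f = J_g. -/

import Mathlib

open Filter Set Topology

noncomputable section

noncomputable instance : UniformSpace (OnePoint ℂ) := uniformSpaceOfCompactR1

/-- Extension of a polynomial to the Riemann sphere, fixing `∞`. -/
def polyMap (p : Polynomial ℂ) : Function.End (OnePoint ℂ) :=
  OnePoint.map (fun z => p.eval z)

/-- A set is completely invariant under `f`. -/
def CInv (f : Function.End (OnePoint ℂ)) (S : Set (OnePoint ℂ)) : Prop :=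
  f '' S ⊆ S ∧ f ⁻¹' S ⊆ S

/-- The smallest closed set with at least three points that is completely invariant
under every member of `fs`. -/
def EG (fs : Set (Function.End (OnePoint ℂ))) : Set (OnePoint ℂ) :=
  ⋂₀ {S : Set (OnePoint ℂ) | IsClosed S ∧ 3 ≤ S.encard ∧ ∀ f ∈ fs, CInv f S}

/-- The set of normality (Fatou set) of a family of self-maps of the sphere:
points having a neighborhood on which the family is normal (equicontinuous). -/
def fatouSet (H : Set (Function.End (OnePoint ℂ))) : Set (OnePoint ℂ) :=
  {z | ∃ U ∈ nhds z, EquicontinuousOn (fun h : H => (h.1 : OnePoint ℂ → OnePoint ℂ)) U}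

/-- The Julia set of a family of self-maps of the sphere. -/
def juliaSG (H : Set (Function.End (OnePoint ℂ))) : Set (OnePoint ℂ) :=
  (fatouSet H)ᶜ

/-- The semigroup (under composition) generated by a set of self-maps of the sphere. -/
def semigroupGen (fs : Set (Function.End (OnePoint ℂ))) : Set (Function.End (OnePoint ℂ)) :=
  (Subsemigroup.closure fs : Subsemigroup (Function.End (OnePoint ℂ)))

/-- The Julia set of a single map: complement of the set of normality of its iterates. -/
def juliaSet (f : Function.End (OnePoint ℂ)) : Set (OnePoint ℂ) :=
  juliaSG (semigroupGen {f})

/-- `f` is a rational map of degree at least two on the Riemann sphere. -/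
def IsRatMapD2 (f : Function.End (OnePoint ℂ)) : Prop :=
  Continuous f ∧ ∃ p q : Polynomial ℂ, IsCoprime p q ∧ 2 ≤ max p.natDegree q.natDegree ∧
    ∀ z : ℂ, q.eval z ≠ 0 → f (z : OnePoint ℂ) = ((p.eval z / q.eval z : ℂ) : OnePoint ℂ)


/-- `Gh` behaves like the Green's function (with pole at `∞`) of the unbounded Fatou
component `F` of a polynomial: positive and continuous on `F \ {∞}`, tending to `0` at
every boundary point of `F`. -/
def IsGreenOn (F : Set (OnePoint ℂ)) (Gh : OnePoint ℂ → ℝ) : Prop :=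
  (∀ z ∈ F, z ≠ OnePoint.infty → 0 < Gh z) ∧
    ContinuousOn Gh (F \ {OnePoint.infty}) ∧
    ∀ z₀ ∈ frontier F, Filter.Tendsto Gh (nhdsWithin z₀ (F \ {OnePoint.infty})) (nhds 0)

/-! Approach a point `z ∈ F_∞ ∩ closure C` through `C`. If `z ∉ G_∞`, then `z ∈ ∂G_∞`, so
`G_g → 0` along the approach; but `G_f = G_g` on `C` and `G_f` is continuous at `z` with
`G_f z > 0`. Hence `C` is relatively clopen in the connected set `F_∞`, so `F_∞ = C`, and by
symmetry `G_∞ = C`.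

It remains to see that the Julia set of a polynomial of degree at least two is `∂F_∞`. Beyond an
escape radius `R` the polynomial at least doubles the modulus, so on each set
`{|p^[n]| > R} ∪ {∞}` the iterates converge uniformly to `∞` and are equicontinuous. By the maximum
principle every component of `{|p^[n]| > R}` is unbounded, so all these sets lie in `F_∞`. Off the
closure of `F_∞` the orbits therefore stay in the disc of radius `R`, and the Schwarz lemma makes
the iterates equicontinuous there. -/

open Metric Bornology OnePoint

local notation "𝕊" => OnePoint ℂ

section Topology

variable {X : Type*} [TopologicalSpace X]

theorem mem_connectedComponentIn_of_mem_closure {W : Set X} {x z : X} (hz : z ∈ W)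
    (hcl : z ∈ closure (connectedComponentIn W x)) : z ∈ connectedComponentIn W x := by
  have hx : x ∈ W := by
    by_contra hx
    simp [connectedComponentIn_eq_empty hx] at hcl
  have hpre : IsPreconnected (insert z (connectedComponentIn W x)) :=
    isPreconnected_connectedComponentIn.subset_closure (subset_insert _ _)
      (insert_subset hcl subset_closure)
  exact hpre.subset_connectedComponentIn (mem_insert_of_mem _ (mem_connectedComponentIn hx))
    (insert_subset hz (connectedComponentIn_subset _ _)) (mem_insert _ _)

theorem IsOpen.frontier_connectedComponentIn_subset_compl [LocallyConnectedSpace X] {W : Set X}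
    (hW : IsOpen W) (x : X) : frontier (connectedComponentIn W x) ⊆ Wᶜ := by
  rw [hW.connectedComponentIn.frontier_eq]
  rintro z ⟨hcl, hnot⟩ hz
  exact hnot (mem_connectedComponentIn_of_mem_closure hz hcl)

theorem UniformContinuousOn.comp_equicontinuousAt {ι α β : Type*} [UniformSpace α] [UniformSpace β]
    {g : α → β} {t : Set α} {F : ι → X → α} {x₀ : X} (hg : UniformContinuousOn g t)
    (hF : EquicontinuousAt F x₀) (ht : ∀ᶠ x in 𝓝 x₀, ∀ i, F i x ∈ t) :
    EquicontinuousAt (fun i => g ∘ F i) x₀ := by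
  intro U hU
  have hU' := hg hU
  rw [mem_map, mem_inf_principal] at hU'
  filter_upwards [hF _ hU', ht] with x hx hxt i
  exact hx i ⟨ht.self_of_nhds i, hxt i⟩

theorem equicontinuousWithinAt_of_eventually_mapsTo {α : Type*} [UniformSpace α] {F : ℕ → X → α}
    {U : Set X} {x₀ : X} {a : α} (hc : ∀ n, ContinuousWithinAt (F n) U x₀) (hx₀ : x₀ ∈ U)
    (ha : ∀ W ∈ 𝓝 a, ∀ᶠ n in atTop, MapsTo (F n) U W) : EquicontinuousWithinAt F U x₀ := by
  intro V hV
  have hVa : V ∈ 𝓝 a ×ˢ 𝓝 a := nhds_prod_eq (x := a) (y := a) ▸ nhds_le_uniformity a hV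
  obtain ⟨W, hW, hWV⟩ := mem_prod_self_iff.1 hVa
  obtain ⟨N, hN⟩ := eventually_atTop.1 (ha W hW)
  have hhead : ∀ᶠ x in 𝓝[U] x₀, ∀ n ∈ Iio N, (F n x₀, F n x) ∈ V :=
    (finite_Iio N).eventually_all.2 fun n _ => (hc n).eventually (UniformSpace.ball_mem_nhds _ hV)
  filter_upwards [hhead, self_mem_nhdsWithin] with x hx hxU n
  rcases lt_or_ge n N with hn | hn
  · exact hx n hn
  · exact hWV ⟨hN n hn hx₀, hN n hn hxU⟩

end Topology

section OnePoint

variable {E : Type*} [NormedAddCommGroup E]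

theorem OnePoint.exists_compl_image_coe_closedBall_subset {W : Set (OnePoint E)} (hW : W ∈ 𝓝 ∞) :
    ∃ r : ℝ, (((↑) : E → OnePoint E) '' closedBall 0 r)ᶜ ⊆ W := by
  obtain ⟨s, ⟨-, hs⟩, hsW⟩ := hasBasis_nhds_infty.mem_iff.1 hW
  obtain ⟨r, hr⟩ := hs.isBounded.subset_closedBall 0
  refine ⟨r, ?_⟩
  rw [compl_image_coe]
  exact (union_subset_union_left _ (image_mono (compl_subset_compl.2 hr))).trans hsW

theorem OnePoint.infty_mem_closure_image_coe {s : Set E} (hs : ¬IsBounded s) :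
    ∞ ∈ closure (((↑) : E → OnePoint E) '' s) := by
  refine mem_closure_iff_nhds.2 fun W hW => ?_
  obtain ⟨r, hr⟩ := exists_compl_image_coe_closedBall_subset hW
  obtain ⟨z, hzs, hzr⟩ :=
    not_subset.1 fun h => hs ((isBounded_closedBall (x := 0) (r := r)).subset h)
  exact ⟨z, hr (by simpa using hzr), z, hzs, rfl⟩

theorem IsPreconnected.insert_infty_image_coe {s : Set E} (hs : IsPreconnected s)
    (hb : ¬IsBounded s) : IsPreconnected (insert ∞ (((↑) : E → OnePoint E) '' s)) :=
  (hs.image _ continuous_coe.continuousOn).subset_closure (subset_insert _ _)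
    (insert_subset (infty_mem_closure_image_coe hb) subset_closure)

theorem OnePoint.equicontinuousAt_coe_iff {ι α : Type*} [UniformSpace α] {F : ι → OnePoint E → α}
    {c : E} : EquicontinuousAt F (c : OnePoint E) ↔ EquicontinuousAt (fun i => F i ∘ (↑)) c := by
  simp only [EquicontinuousAt, nhds_coe_eq, eventually_map, Function.comp_apply]

end OnePoint

instance : LocallyConnectedSpace 𝕊 :=
  haveI := ChartedSpace.locallyConnectedSpace (EuclideanSpace ℝ (Fin 2))
    (sphere (0 : EuclideanSpace ℝ (Fin 3)) 1)
  (onePointEquivSphereOfFinrankEq (ι := Fin 3) (V := ℂ) (by simp)).locallyConnectedSpace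

theorem equicontinuousAt_of_differentiableOn_of_norm_le {ι : Type*} {F : ι → ℂ → ℂ} {c : ℂ}
    {δ M : ℝ} (hδ : 0 < δ) (hd : ∀ i, DifferentiableOn ℂ (F i) (ball c δ))
    (hM : ∀ i, ∀ w ∈ ball c δ, ‖F i w‖ ≤ M) : EquicontinuousAt F c := by
  refine Metric.equicontinuousAt_of_continuity_modulus (fun z => 2 * M / δ * dist z c) ?_ F ?_
  · have hc : Continuous fun z : ℂ => dist z c := continuous_id.dist continuous_const
    simpa using (hc.tendsto c).const_mul (2 * M / δ)
  · filter_upwards [ball_mem_nhds c hδ] with z hz i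
    rw [dist_comm]
    refine Complex.dist_le_div_mul_dist_of_mapsTo_ball (hd i) (fun w hw => ?_) hz
    rw [mem_closedBall]
    linarith [dist_le_norm_add_norm (F i w) (F i c), hM i w hw, hM i c (mem_ball_self hδ)]

theorem not_isBounded_connectedComponentIn_norm_gt {q : ℂ → ℂ} (hq : Differentiable ℂ q) {R : ℝ}
    {x : ℂ} (hx : R < ‖q x‖) : ¬IsBounded (connectedComponentIn {z | R < ‖q z‖} x) := by
  intro hbd
  have hopen : IsOpen {z | R < ‖q z‖} := isOpen_lt continuous_const hq.continuous.norm
  have hfr : ∀ y ∈ frontier (connectedComponentIn {z | R < ‖q z‖} x), ‖q y‖ ≤ R := fun y hy =>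
    not_lt.1 (hopen.frontier_connectedComponentIn_subset_compl x hy)
  exact (Complex.norm_le_of_forall_mem_frontier_norm_le hbd hq.diffContOnCl hfr
    (subset_closure (mem_connectedComponentIn hx))).not_gt hx

theorem isOpen_fatouSet (H : Set (Function.End 𝕊)) : IsOpen (fatouSet H) :=
  isOpen_iff_mem_nhds.2 fun _ ⟨U, hU, hE⟩ => by
    filter_upwards [eventually_mem_nhds_iff.2 hU] with x hx using ⟨U, hx, hE⟩

theorem exists_eq_pow_of_mem_semigroupGen_singleton {q h : Function.End 𝕊}
    (hh : h ∈ semigroupGen {q}) : ∃ n : ℕ, h = q ^ n := by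
  induction hh using Subsemigroup.closure_induction with
  | mem x hx => exact ⟨1, by rw [mem_singleton_iff.1 hx, pow_one]⟩
  | mul x y _ _ hx hy =>
    obtain ⟨a, rfl⟩ := hx
    obtain ⟨b, rfl⟩ := hy
    exact ⟨a + b, (pow_add q a b).symm⟩

theorem mem_fatouSet_semigroupGen_singleton {q : Function.End 𝕊} {U : Set 𝕊} {z : 𝕊}
    (hU : U ∈ 𝓝 z) (h : ∀ x ∈ U, EquicontinuousWithinAt (fun n : ℕ => q^[n]) U x) :
    z ∈ fatouSet (semigroupGen {q}) := by
  choose u hu using fun h : semigroupGen {q} => exists_eq_pow_of_mem_semigroupGen_singleton h.2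
  refine ⟨U, hU, fun x hx => ?_⟩
  have hfam : (fun h : semigroupGen {q} => (h.1 : 𝕊 → 𝕊)) = (fun n : ℕ => q^[n]) ∘ u :=
    funext hu
  exact hfam ▸ (h x hx).comp u

section Polynomial

open Polynomial

variable {p : ℂ[X]} {R : ℝ}

def IsEscapeRadius (p : ℂ[X]) (R : ℝ) : Prop :=
  0 < R ∧ ∀ z : ℂ, R ≤ ‖z‖ → 2 * ‖z‖ ≤ ‖p.eval z‖

theorem exists_isEscapeRadius (hp : 2 ≤ p.natDegree) : ∃ R, IsEscapeRadius p R := by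
  have hdivX : 0 < p.divX.degree :=
    natDegree_pos_iff_degree_pos.1 (by rw [natDegree_divX_eq_natDegree_tsub_one]; omega)
  have hlarge : ∀ᶠ z in cobounded ℂ, 3 ≤ ‖p.divX.eval z‖ ∧ ‖p.coeff 0‖ ≤ ‖z‖ :=
    ((p.divX.tendsto_norm_atTop hdivX tendsto_norm_cobounded_atTop).eventually_ge_atTop 3).and
      (tendsto_norm_cobounded_atTop.eventually_ge_atTop _)
  rw [← comap_norm_atTop, eventually_comap, eventually_atTop] at hlarge
  obtain ⟨R, hR⟩ := hlarge
  refine ⟨max R 1, by positivity, fun z hz => ?_⟩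
  obtain ⟨h3, hc⟩ := hR _ (le_of_max_le_left hz) z rfl
  have hsplit : p.eval z = p.divX.eval z * z + p.coeff 0 := by
    conv_lhs => rw [← divX_mul_X_add p]
    simp
  calc 2 * ‖z‖ ≤ ‖p.divX.eval z‖ * ‖z‖ - ‖p.coeff 0‖ := by nlinarith [norm_nonneg z]
    _ = ‖p.divX.eval z * z‖ - ‖-p.coeff 0‖ := by rw [norm_mul, norm_neg]
    _ ≤ ‖p.eval z‖ := by simpa [hsplit] using norm_sub_norm_le (p.divX.eval z * z) (-p.coeff 0)

theorem IsEscapeRadius.pow_mul_le_norm_iterate (hR : IsEscapeRadius p R) (n : ℕ) {z : ℂ}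
    (hz : R ≤ ‖z‖) : 2 ^ n * ‖z‖ ≤ ‖p.eval^[n] z‖ := by
  induction n with
  | zero => simp
  | succ n ih =>
    have hRn : R ≤ ‖p.eval^[n] z‖ :=
      hz.trans ((le_mul_of_one_le_left (norm_nonneg z) (one_le_pow₀ one_le_two)).trans ih)
    rw [Function.iterate_succ_apply', pow_succ]
    calc 2 ^ n * 2 * ‖z‖ = 2 * (2 ^ n * ‖z‖) := by ring
      _ ≤ 2 * ‖p.eval^[n] z‖ := by gcongr
      _ ≤ _ := hR.2 _ hRn

theorem polyMap_iterate_coe (p : ℂ[X]) (n : ℕ) (z : ℂ) :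
    (polyMap p)^[n] z = ↑(p.eval^[n] z) :=
  (Function.Semiconj.iterate_right (f := ((↑) : ℂ → 𝕊)) (fun _ => rfl) n z).symm

theorem polyMap_iterate_infty (p : ℂ[X]) (n : ℕ) : (polyMap p)^[n] ∞ = ∞ :=
  Function.iterate_fixed rfl n

theorem continuous_polyMap (hp : 0 < p.natDegree) : Continuous (polyMap p : 𝕊 → 𝕊) :=
  continuous_map p.continuous <| by
    rw [coclosedCompact_eq_cocompact, ← cobounded_eq_cocompact,
      ← tendsto_norm_atTop_iff_cobounded]
    exact p.tendsto_norm_atTop (natDegree_pos_iff_degree_pos.1 hp) tendsto_norm_cobounded_atTop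


def escapeSet (p : ℂ[X]) (R : ℝ) (n : ℕ) : Set 𝕊 :=
  (polyMap p)^[n] ⁻¹' (((↑) : ℂ → 𝕊) '' closedBall 0 R)ᶜ

theorem coe_mem_escapeSet {n : ℕ} {z : ℂ} : (z : 𝕊) ∈ escapeSet p R n ↔ R < ‖p.eval^[n] z‖ := by
  simp [escapeSet, polyMap_iterate_coe]

theorem infty_mem_escapeSet (p : ℂ[X]) (R : ℝ) (n : ℕ) : ∞ ∈ escapeSet p R n := by
  simp [escapeSet, polyMap_iterate_infty]

theorem isOpen_escapeSet (hp : 0 < p.natDegree) (R : ℝ) (n : ℕ) : IsOpen (escapeSet p R n) :=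
  ((continuous_polyMap hp).iterate n).isOpen_preimage _
    (isClosed_image_coe.2 ⟨isClosed_closedBall, isCompact_closedBall 0 R⟩).isOpen_compl

theorem IsEscapeRadius.escapeSet_subset (hR : IsEscapeRadius p R) {k n : ℕ} {r : ℝ} (hkn : k ≤ n)
    (hr : r ≤ 2 ^ (n - k) * R) : escapeSet p R k ⊆ escapeSet p r n := by
  intro x hx
  cases x with
  | infty => exact infty_mem_escapeSet p r n
  | coe w =>
    rw [coe_mem_escapeSet] at hx ⊢
    have hsplit : p.eval^[n] w = p.eval^[n - k] (p.eval^[k] w) := by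
      rw [← Function.iterate_add_apply, Nat.sub_add_cancel hkn]
    calc r ≤ 2 ^ (n - k) * R := hr
      _ < 2 ^ (n - k) * ‖p.eval^[k] w‖ := by gcongr
      _ ≤ ‖p.eval^[n] w‖ := hsplit ▸ hR.pow_mul_le_norm_iterate _ hx.le

theorem IsEscapeRadius.equicontinuousWithinAt_escapeSet (hp : 0 < p.natDegree)
    (hR : IsEscapeRadius p R) {k : ℕ} {x : 𝕊} (hx : x ∈ escapeSet p R k) :
    EquicontinuousWithinAt (fun n : ℕ => (polyMap p)^[n]) (escapeSet p R k) x := by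
  refine equicontinuousWithinAt_of_eventually_mapsTo (a := ∞)
    (fun n => ((continuous_polyMap hp).iterate n).continuousWithinAt) hx fun W hW => ?_
  obtain ⟨r, hr⟩ := exists_compl_image_coe_closedBall_subset hW
  have hgrow : Tendsto (fun n => 2 ^ (n - k) * R) atTop atTop :=
    ((tendsto_pow_atTop_atTop_of_one_lt one_lt_two).comp (tendsto_sub_atTop_nat k)).atTop_mul_const
      hR.1
  filter_upwards [eventually_ge_atTop k, hgrow.eventually_ge_atTop r] with n hkn hrn
  exact fun y hy => hr (hR.escapeSet_subset hkn hrn hy)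

theorem IsEscapeRadius.escapeSet_subset_fatouSet (hp : 0 < p.natDegree) (hR : IsEscapeRadius p R)
    (k : ℕ) : escapeSet p R k ⊆ fatouSet (semigroupGen {polyMap p}) := fun _ hx =>
  mem_fatouSet_semigroupGen_singleton ((isOpen_escapeSet hp R k).mem_nhds hx) fun _ hy =>
    hR.equicontinuousWithinAt_escapeSet hp hy

def basinInfty (p : ℂ[X]) : Set 𝕊 :=
  connectedComponentIn (fatouSet (semigroupGen {polyMap p})) ∞

theorem isOpen_basinInfty (p : ℂ[X]) : IsOpen (basinInfty p) :=
  (isOpen_fatouSet _).connectedComponentIn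

theorem IsEscapeRadius.escapeSet_subset_basinInfty (hp : 0 < p.natDegree) (hR : IsEscapeRadius p R)
    (k : ℕ) : escapeSet p R k ⊆ basinInfty p := by
  intro x hx
  cases x with
  | infty => exact mem_connectedComponentIn (hR.escapeSet_subset_fatouSet hp k hx)
  | coe w =>
    rw [coe_mem_escapeSet] at hx
    set K := connectedComponentIn {z : ℂ | R < ‖p.eval^[k] z‖} w
    have hK : IsPreconnected (insert ∞ (((↑) : ℂ → 𝕊) '' K)) :=
      isPreconnected_connectedComponentIn.insert_infty_image_coe
        (not_isBounded_connectedComponentIn_norm_gt (p.differentiable.iterate k) hx)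
    have hKesc : insert ∞ (((↑) : ℂ → 𝕊) '' K) ⊆ escapeSet p R k :=
      insert_subset (infty_mem_escapeSet p R k) <| image_subset_iff.2 fun z hz =>
        coe_mem_escapeSet.2 (connectedComponentIn_subset {z : ℂ | R < ‖p.eval^[k] z‖} w hz)
    exact hK.subset_connectedComponentIn (mem_insert _ _)
      (hKesc.trans (hR.escapeSet_subset_fatouSet hp k))
      (mem_insert_of_mem _ (mem_image_of_mem _ (mem_connectedComponentIn hx)))

theorem infty_mem_basinInfty (hp : 2 ≤ p.natDegree) : ∞ ∈ basinInfty p := by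
  obtain ⟨R, hR⟩ := exists_isEscapeRadius hp
  exact hR.escapeSet_subset_basinInfty (by omega) 0 (infty_mem_escapeSet p R 0)

theorem equicontinuousAt_polyMap_iterate_of_norm_le {c : ℂ} {δ M : ℝ} (hδ : 0 < δ)
    (hM : ∀ w ∈ ball c δ, ∀ n : ℕ, ‖p.eval^[n] w‖ ≤ M) :
    EquicontinuousAt (fun n : ℕ => (polyMap p)^[n]) (c : 𝕊) := by
  have hiter : EquicontinuousAt (fun n : ℕ => p.eval^[n]) c :=
    equicontinuousAt_of_differentiableOn_of_norm_le hδ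
      (fun n => (p.differentiable.iterate n).differentiableOn) fun n w hw => hM w hw n
  have hcoe := ((isCompact_closedBall (0 : ℂ) M).uniformContinuousOn_of_continuous
    continuous_coe.continuousOn).comp_equicontinuousAt hiter <| by
      filter_upwards [ball_mem_nhds c hδ] with w hw n
      simpa using hM w hw n
  rw [equicontinuousAt_coe_iff]
  simpa only [Function.comp_def, polyMap_iterate_coe] using hcoe

theorem juliaSet_polyMap_eq_frontier_basinInfty (hp : 2 ≤ p.natDegree) :
    juliaSet (polyMap p) = frontier (basinInfty p) := by
  obtain ⟨R, hR⟩ := exists_isEscapeRadius hp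
  show (fatouSet _)ᶜ = _
  rw [compl_eq_comm]
  refine Subset.antisymm (fun z hz => ?_) fun z hz hfr =>
    (isOpen_fatouSet _).frontier_connectedComponentIn_subset_compl ∞ hfr hz
  by_cases hzA : z ∈ closure (basinInfty p)
  · have hzA' : z ∈ basinInfty p := by
      by_contra h
      exact hz ((isOpen_basinInfty p).frontier_eq ▸ ⟨hzA, h⟩)
    exact connectedComponentIn_subset _ _ hzA'
  have hbdd : ∀ w : ℂ, (w : 𝕊) ∉ closure (basinInfty p) → ∀ n, ‖p.eval^[n] w‖ ≤ R :=
    fun w hw n => not_lt.1 fun h => hw (subset_closure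
      (hR.escapeSet_subset_basinInfty (by omega) n (coe_mem_escapeSet.2 h)))
  refine mem_fatouSet_semigroupGen_singleton (isClosed_closure.isOpen_compl.mem_nhds hzA)
    fun x hx => (?_ : EquicontinuousAt _ x).equicontinuousWithinAt _
  cases x with
  | infty => exact absurd (subset_closure (infty_mem_basinInfty hp)) hx
  | coe c =>
    obtain ⟨δ, hδ, hball⟩ :=
      isOpen_iff.1 (isClosed_closure.isOpen_compl.preimage continuous_coe) c hx
    exact equicontinuousAt_polyMap_iterate_of_norm_le hδ fun w hw => hbdd w (hball hw)

end Polynomial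

theorem subset_connectedComponentIn_inter_of_isGreenOn {F G : Set 𝕊} {Gf Gg : 𝕊 → ℝ}
    (hFo : IsOpen F) (hGo : IsOpen G) (hFc : IsPreconnected F) (hF : ∞ ∈ F) (hG : ∞ ∈ G)
    (hGf : IsGreenOn F Gf) (hGg : IsGreenOn G Gg)
    (hagree : ∀ z ∈ connectedComponentIn (F ∩ G) ∞, z ≠ ∞ → Gf z = Gg z) :
    F ⊆ connectedComponentIn (F ∩ G) ∞ := by
  set C := connectedComponentIn (F ∩ G) ∞
  have hCF : C ⊆ F := (connectedComponentIn_subset _ _).trans inter_subset_left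
  have hCG : C ⊆ G := (connectedComponentIn_subset _ _).trans inter_subset_right
  refine hFc.subset_of_closure_inter_subset (hFo.inter hGo).connectedComponentIn
    ⟨∞, hF, mem_connectedComponentIn ⟨hF, hG⟩⟩ ?_
  rintro z ⟨hzC, hzF⟩
  refine mem_connectedComponentIn_of_mem_closure ⟨hzF, ?_⟩ hzC
  by_contra hzG
  have hz : z ≠ ∞ := fun h => hzG (h ▸ hG)
  have hl : (𝓝[C \ {∞}] z).NeBot := by
    rw [sdiff_eq, nhdsWithin_inter_of_mem' (mem_nhdsWithin_of_mem_nhds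
      (isOpen_compl_singleton.mem_nhds hz))]
    exact mem_closure_iff_nhdsWithin_neBot.1 hzC
  set l := 𝓝[C \ {∞}] z
  have hGg0 : Tendsto Gg l (𝓝 0) :=
    (hGg.2.2 z (hGo.frontier_eq ▸ ⟨closure_mono hCG hzC, hzG⟩)).mono_left
      (nhdsWithin_mono _ (sdiff_subset_sdiff_left hCG))
  have hGfz : Tendsto Gf l (𝓝 (Gf z)) :=
    (hGf.2.1 z ⟨hzF, hz⟩).mono_left (nhdsWithin_mono _ (sdiff_subset_sdiff_left hCF))
  have heq : Gf =ᶠ[l] Gg := eventually_nhdsWithin_of_forall fun y hy => hagree y hy.1 hy.2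
  exact (hGf.1 z hzF hz).ne' (tendsto_nhds_unique hGfz (hGg0.congr' heq.symm))

theorem eq_of_isGreenOn {F G : Set 𝕊} {Gf Gg : 𝕊 → ℝ} (hFo : IsOpen F) (hGo : IsOpen G)
    (hFc : IsPreconnected F) (hGc : IsPreconnected G) (hF : ∞ ∈ F) (hG : ∞ ∈ G)
    (hGf : IsGreenOn F Gf) (hGg : IsGreenOn G Gg)
    (hagree : ∀ z ∈ connectedComponentIn (F ∩ G) ∞, z ≠ ∞ → Gf z = Gg z) : F = G := by
  have hFG := subset_connectedComponentIn_inter_of_isGreenOn hFo hGo hFc hF hG hGf hGg hagree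
  have hGF := subset_connectedComponentIn_inter_of_isGreenOn hGo hFo hGc hG hF hGg hGf
    fun z hz hz' => (hagree z (inter_comm G F ▸ hz) hz').symm
  exact (hFG.trans ((connectedComponentIn_subset _ _).trans inter_subset_right)).antisymm
    (hGF.trans ((connectedComponentIn_subset _ _).trans inter_subset_right))

/-- If the Green's functions of the basins of `∞` of two polynomials of degree at least
two agree on the unbounded component of the intersection of the two basins, then the
Julia sets coincide. -/
theorem stmt16 (f g : Polynomial ℂ) (hf : 2 ≤ f.natDegree) (hg : 2 ≤ g.natDegree)
    (Gf Gg : OnePoint ℂ → ℝ)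
    (hGf : IsGreenOn
      (connectedComponentIn (fatouSet (semigroupGen {polyMap f})) OnePoint.infty) Gf)
    (hGg : IsGreenOn
      (connectedComponentIn (fatouSet (semigroupGen {polyMap g})) OnePoint.infty) Gg)
    (hagree : ∀ z ∈ connectedComponentIn
        (connectedComponentIn (fatouSet (semigroupGen {polyMap f})) OnePoint.infty ∩
          connectedComponentIn (fatouSet (semigroupGen {polyMap g})) OnePoint.infty)
        OnePoint.infty,
      z ≠ OnePoint.infty → Gf z = Gg z) :
    juliaSet (polyMap f) = juliaSet (polyMap g) := by
  have hbasin : basinInfty f = basinInfty g :=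
    eq_of_isGreenOn (isOpen_basinInfty f) (isOpen_basinInfty g) isPreconnected_connectedComponentIn
      isPreconnected_connectedComponentIn (infty_mem_basinInfty hf) (infty_mem_basinInfty hg)
      hGf hGg hagree
  rw [juliaSet_polyMap_eq_frontier_basinInfty hf, juliaSet_polyMap_eq_frontier_basinInfty hg,
    hbasin]

end
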